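/- Gradient perturbation bound for flexible GBT: let D be a flexible-GBT dataset and let D' be obtained from D by adding one comparison (a, b, r, f), where the support of f is contained in [−R, R] and |r| ≤ R. Then for every β ∈ ℝ^D, ‖∇L(β | D') − ∇L(β | D)‖₂ ≤ 4 R ‖x‖_{2,∞}, where ‖x‖_{2,∞} = max_{a ∈ [A]} ‖x_a‖₂. -/

import Mathlib

/-!
Adding the comparison `(a, b, r, f)` adds to the loss the term `β ↦ φ ⟪x a - x b, β⟫` with
`φ t = Φ_f(t) - r t`, whose gradient is `(Φ_f'(θ) - r) • (x a - x b)`. The derivative `Φ_f'(θ)`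
is the mean of the exponentially tilted law `f.tilted (θ * ·)`, which is absolutely continuous
with respect to `f` and hence still concentrated on `[-R, R]`; so `|Φ_f'(θ) - r| ≤ 2R`, while
`‖x a - x b‖ ≤ 2 ‖x‖_{2,∞}`. Where `L(· | D)` is not differentiable, neither is `L(· | D')`, and
both gradients are `0` by Mathlib's convention.
-/

open MeasureTheory RealInnerProductSpace

noncomputable section

/-- The cumulant generating function `Φ_μ(θ) = log ∫ exp(θ r) dμ(r)` of a measure `μ` on `ℝ`. -/
def cgfm (μ : Measure ℝ) (θ : ℝ) : ℝ := Real.log (∫ r, Real.exp (θ * r) ∂μ)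

/-- `μ` has finite exponential moments: `∫ exp(θ r) dμ(r) < ∞` for every `θ`. -/
def HasExpMoments (μ : Measure ℝ) : Prop :=
  ∀ θ : ℝ, Integrable (fun r => Real.exp (θ * r)) μ

/-- The quadratic form `v ↦ vᵀ M v`. -/
def quadForm {n : ℕ} (M : Matrix (Fin n) (Fin n) ℝ) (v : EuclideanSpace ℝ (Fin n)) : ℝ :=
  ∑ i, ∑ j, v i * M i j * v j

/-- The flexible-GBT negative log-posterior `L(β | D)` for a dataset `data` consisting of
comparisons `(a, b, r, f)` (entities `a, b`, value `r`, root law `f`), with embedding columns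
`x a ∈ ℝ^D` and prior covariance matrix `S = Σ_β`. -/
def fgbtLoss {Dd A : ℕ} (x : Fin A → EuclideanSpace ℝ (Fin Dd))
    (S : Matrix (Fin Dd) (Fin Dd) ℝ)
    (data : Multiset (Fin A × Fin A × ℝ × Measure ℝ))
    (β : EuclideanSpace ℝ (Fin Dd)) : ℝ :=
  (1 / 2) * quadForm S⁻¹ β
    + (data.map (fun q =>
        cgfm q.2.2.2 ⟪x q.1 - x q.2.1, β⟫ - q.2.2.1 * ⟪x q.1 - x q.2.1, β⟫)).sum

open ProbabilityTheory InnerProductSpace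

lemma ProbabilityTheory.abs_deriv_cgf_le {Ω : Type*} [MeasurableSpace Ω] {X : Ω → ℝ}
    {μ : Measure Ω} {R t : ℝ} (hR : 0 ≤ R) (hX : ∀ᵐ ω ∂μ, |X ω| ≤ R)
    (ht : t ∈ interior (integrableExpSet X μ)) :
    |deriv (cgf X μ) t| ≤ R := by
  rw [← integral_tilted_mul_self ht, ← Real.norm_eq_abs]
  calc ‖∫ ω, X ω ∂μ.tilted (t * X ·)‖
      ≤ R * (μ.tilted (t * X ·)).real Set.univ :=
        norm_integral_le_of_norm_le_const (tilted_absolutelyContinuous μ _ hX)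
    _ ≤ R := mul_le_of_le_one_right hR measureReal_le_one

section Gradient

variable {F : Type*} [NormedAddCommGroup F] [InnerProductSpace ℝ F] [CompleteSpace F]

lemma HasGradientAt.add {f g : F → ℝ} {f' g' x : F} (hf : HasGradientAt f f' x)
    (hg : HasGradientAt g g' x) : HasGradientAt (fun y => f y + g y) (f' + g') x := by
  rw [hasGradientAt_iff_hasFDerivAt, map_add]
  exact hf.hasFDerivAt.add hg.hasFDerivAt

lemma HasDerivAt.hasGradientAt_comp_inner {φ : ℝ → ℝ} {c : ℝ} {v x : F}
    (h : HasDerivAt φ c ⟪v, x⟫) : HasGradientAt (fun y => φ ⟪v, y⟫) (c • v) x := by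
  rw [hasGradientAt_iff_hasFDerivAt]
  refine (h.comp_hasFDerivAt x (innerSL ℝ v).hasFDerivAt).congr_fderiv ?_
  ext y
  simp

lemma norm_gradient_add_sub_gradient_le {f g : F → ℝ} {g' x : F} (hg : HasGradientAt g g' x) :
    ‖gradient (fun y => f y + g y) x - gradient f x‖ ≤ ‖g'‖ := by
  by_cases hf : DifferentiableAt ℝ f x
  · rw [(hf.hasGradientAt.add hg).gradient, add_sub_cancel_left]
  · have hfg : ¬ DifferentiableAt ℝ (fun y => f y + g y) x :=
      mt hg.differentiableAt.fun_add_iff_left.1 hf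
    rw [gradient_eq_zero_of_not_differentiableAt hf,
      gradient_eq_zero_of_not_differentiableAt hfg, sub_zero, norm_zero]
    exact norm_nonneg _

end Gradient

lemma fgbtLoss_cons {Dd A : ℕ} (x : Fin A → EuclideanSpace ℝ (Fin Dd))
    (S : Matrix (Fin Dd) (Fin Dd) ℝ) (data : Multiset (Fin A × Fin A × ℝ × Measure ℝ))
    (a b : Fin A) (r : ℝ) (f : Measure ℝ) :
    fgbtLoss x S ((a, b, r, f) ::ₘ data) = fun β => fgbtLoss x S data β +
      (fun t => cgfm f t - r * t) ⟪x a - x b, β⟫ := by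
  ext β
  simp only [fgbtLoss, Multiset.map_cons, Multiset.sum_cons]
  ring

lemma norm_sub_le_two_mul_iSup_norm {ι E : Type*} [Finite ι] [SeminormedAddCommGroup E]
    (x : ι → E) (a b : ι) : ‖x a - x b‖ ≤ 2 * ⨆ i, ‖x i‖ := by
  have hle : ∀ i, ‖x i‖ ≤ ⨆ i, ‖x i‖ := le_ciSup (Set.finite_range _).bddAbove
  linarith [norm_sub_le (x a) (x b), hle a, hle b]

theorem fgbt_gradient_perturbation_bound_general
    {Dd A : ℕ} (x : Fin A → EuclideanSpace ℝ (Fin Dd))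
    (S : Matrix (Fin Dd) (Fin Dd) ℝ)
    (data : Multiset (Fin A × Fin A × ℝ × Measure ℝ))
    (a b : Fin A) (r : ℝ) (f : Measure ℝ) (hf : HasExpMoments f)
    (R : ℝ) (hsupp : f (Set.Icc (-R) R)ᶜ = 0) (hr : |r| ≤ R)
    (β : EuclideanSpace ℝ (Fin Dd)) :
    ‖gradient (fgbtLoss x S ((a, b, r, f) ::ₘ data)) β - gradient (fgbtLoss x S data) β‖
      ≤ 4 * R * ⨆ a' : Fin A, ‖x a'‖ := by
  have hR : 0 ≤ R := (abs_nonneg r).trans hr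
  set θ := ⟪x a - x b, β⟫
  have hθ : θ ∈ interior (integrableExpSet id f) := by
    rw [show integrableExpSet id f = Set.univ from Set.eq_univ_of_forall hf, interior_univ]
    exact Set.mem_univ θ
  have hbdd : ∀ᵐ ω ∂f, |id ω| ≤ R := by
    filter_upwards [mem_ae_iff.2 hsupp] with ω hω using abs_le.2 hω
  -- `cgfm f` is `cgf id f` by definition.
  have hcgf : HasDerivAt (cgfm f) (deriv (cgf id f) θ) θ :=
    (analyticAt_cgf hθ).differentiableAt.hasDerivAt
  have hgrad := ((hcgf.sub ((hasDerivAt_id θ).const_mul r)).hasGradientAt_comp_inner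
    (v := x a - x b))
  rw [fgbtLoss_cons]
  refine (norm_gradient_add_sub_gradient_le hgrad).trans ?_
  rw [norm_smul, Real.norm_eq_abs]
  calc |deriv (cgf id f) θ - r * 1| * ‖x a - x b‖
      ≤ (R + R) * (2 * ⨆ a' : Fin A, ‖x a'‖) := by
        gcongr
        · exact (abs_sub _ _).trans (add_le_add (abs_deriv_cgf_le hR hbdd hθ) (by simpa using hr))
        · exact norm_sub_le_two_mul_iSup_norm x a b
    _ = 4 * R * ⨆ a' : Fin A, ‖x a'‖ := by ring

/-- gradient perturbation bound for flexible GBT. If `D'` is obtained from `D`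
by adding one comparison `(a, b, r, f)` with the support of `f` contained in `[−R, R]` and
`|r| ≤ R`, then for every `β`, `‖∇L(β | D') − ∇L(β | D)‖₂ ≤ 4 R ‖x‖_{2,∞}`, where
`‖x‖_{2,∞} = max_a ‖x_a‖₂`. -/
theorem fgbt_gradient_perturbation_bound
    {Dd A : ℕ} (x : Fin A → EuclideanSpace ℝ (Fin Dd))
    (S : Matrix (Fin Dd) (Fin Dd) ℝ) (hS : S.PosDef)
    (data : Multiset (Fin A × Fin A × ℝ × Measure ℝ))
    (hvalid : ∀ q ∈ data, IsProbabilityMeasure q.2.2.2 ∧ HasExpMoments q.2.2.2)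
    (a b : Fin A) (r : ℝ) (f : Measure ℝ) [IsProbabilityMeasure f] (hf : HasExpMoments f)
    (R : ℝ) (hsupp : f (Set.Icc (-R) R)ᶜ = 0) (hr : |r| ≤ R)
    (β : EuclideanSpace ℝ (Fin Dd)) :
    ‖gradient (fgbtLoss x S ((a, b, r, f) ::ₘ data)) β - gradient (fgbtLoss x S data) β‖
      ≤ 4 * R * ⨆ a' : Fin A, ‖x a'‖ :=
  fgbt_gradient_perturbation_bound_general x S data a b r f hf R hsupp hr β

end
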